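/- Let L denote the Rogers dilogarithm. Then L((√3 + 2)/4) + 8·L(√3 − 1) = 13π²/12. -/

import Mathlib

/-- The real dilogarithm `Li₂(z) = ∑_{n=1}^∞ zⁿ/n²`. -/
noncomputable def dilog (z : ℝ) : ℝ := ∑' n : ℕ, z ^ (n + 1) / ((n : ℝ) + 1) ^ 2

/-- The (non-normalized) Rogers dilogarithm `L(z) = Li₂(z) + (1/2) log z log (1 - z)`. -/
noncomputable def rogersL (z : ℝ) : ℝ := dilog z + 1 / 2 * Real.log z * Real.log (1 - z)

open Real Filter Set Topology


lemma summable_inv_sq : Summable (fun n : ℕ => (1:ℝ) / ((n : ℝ) + 1) ^ 2) := by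
  have := Real.summable_one_div_nat_pow.mpr (le_refl 2)
  have h := (summable_nat_add_iff 1).mpr this
  refine h.congr fun n => ?_
  push_cast
  ring

lemma dilog_zero : dilog 0 = 0 := by
  simp [dilog]

lemma dilog_one : dilog 1 = Real.pi ^ 2 / 6 := by
  have h := hasSum_zeta_two
  have h2 : HasSum (fun n : ℕ => (1:ℝ) / ((n:ℝ) + 1) ^ 2) (Real.pi ^ 2 / 6) := by
    have h3 : HasSum (fun n : ℕ => (1:ℝ) / ((n:ℝ) + 1) ^ 2) (Real.pi ^ 2 / 6 - ∑ i ∈ Finset.range 1, (1:ℝ) / (i:ℝ) ^ 2) := by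
      refine ((hasSum_nat_add_iff' (f := fun n : ℕ => (1:ℝ) / (n : ℝ) ^ 2) 1).mpr h).congr_fun fun n => by push_cast; ring
    simpa using h3
  rw [dilog]
  rw [show (fun n : ℕ => (1:ℝ) ^ (n+1) / ((n:ℝ) + 1) ^ 2) = fun n : ℕ => (1:ℝ) / ((n:ℝ) + 1) ^ 2 by funext n; rw [one_pow]]
  exact h2.tsum_eq

lemma continuousOn_dilog : ContinuousOn dilog (Icc (-1:ℝ) 1) := by
  apply continuousOn_tsum (u := fun n : ℕ => (1:ℝ) / ((n : ℝ) + 1) ^ 2)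
  · intro i
    exact (continuous_pow (i+1)).continuousOn.div_const _
  · exact summable_inv_sq
  · intro n x hx
    obtain ⟨h1, h2⟩ := hx
    have hax : |x| ≤ 1 := abs_le.mpr ⟨h1, h2⟩
    rw [Real.norm_eq_abs, abs_div, abs_pow, abs_of_pos (by positivity : (0:ℝ) < ((n:ℝ)+1)^2)]
    gcongr
    exact pow_le_one₀ (abs_nonneg x) hax

lemma hasDerivAt_dilog {x : ℝ} (h0 : 0 < x) (h1 : x < 1) :
    HasDerivAt dilog (-Real.log (1 - x) / x) x := by
  set r : ℝ := (x + 1) / 2 with hr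
  have hr0 : 0 < r := by positivity
  have hr1 : r < 1 := by rw [hr]; linarith
  have hxr : x < r := by rw [hr]; linarith
  have key : HasDerivAt (fun z => ∑' n : ℕ, z ^ (n + 1) / ((n : ℝ) + 1) ^ 2)
      (∑' n : ℕ, x ^ n / ((n : ℝ) + 1)) x := by
    apply hasDerivAt_tsum_of_isPreconnected
      (u := fun n : ℕ => r ^ n)
      (t := Ioo (-r) r)
      (g := fun (n : ℕ) (z : ℝ) => z ^ (n + 1) / ((n : ℝ) + 1) ^ 2)
      (g' := fun (n : ℕ) (z : ℝ) => z ^ n / ((n : ℝ) + 1))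
      (y₀ := 0)
    · exact summable_geometric_of_lt_one hr0.le hr1
    · exact isOpen_Ioo
    · exact (convex_Ioo _ _).isPreconnected
    · intro n y _
      have h := (hasDerivAt_pow (n + 1) y).div_const (((n : ℝ) + 1) ^ 2)
      refine h.congr_deriv ?_
      have hn : ((n : ℝ) + 1) ≠ 0 := by positivity
      push_cast
      rw [div_eq_div_iff (by positivity) hn]
      ring
    · intro n y hy
      have hy' : |y| ≤ r := le_of_lt (abs_lt.mpr ⟨hy.1, hy.2⟩)
      rw [Real.norm_eq_abs, abs_div, abs_of_pos (by positivity : (0:ℝ) < (n:ℝ) + 1), abs_pow]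
      have b1 : |y| ^ n / ((n:ℝ) + 1) ≤ |y| ^ n :=
        div_le_self (pow_nonneg (abs_nonneg y) n) (by linarith [Nat.cast_nonneg (α := ℝ) n])
      have b2 : |y| ^ n ≤ r ^ n := by gcongr
      linarith
    · exact ⟨by linarith, hr0⟩
    · apply Summable.of_nonneg_of_le (fun n => by positivity) (fun n => ?_) summable_inv_sq
      have hn : (0:ℝ) < ((n:ℝ) + 1) ^ 2 := by positivity
      simp [hn.le]
    · exact ⟨by linarith, hxr⟩
  have hsum : ∑' n : ℕ, x ^ n / ((n : ℝ) + 1) = -Real.log (1 - x) / x := by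
    have h := hasSum_pow_div_log_of_abs_lt_one (x := x) (by rw [abs_of_pos h0]; exact h1)
    have h2 := h.div_const x
    have h3 : HasSum (fun n : ℕ => x ^ n / ((n : ℝ) + 1)) (-Real.log (1 - x) / x) := by
      refine h2.congr_fun fun n => ?_
      rw [pow_succ]
      field_simp
    exact h3.tsum_eq
  rw [← hsum]
  exact key

lemma hasDerivAt_rogersL {x : ℝ} (h0 : 0 < x) (h1 : x < 1) :
    HasDerivAt rogersL (-(1/2) * (Real.log (1 - x) / x + Real.log x / (1 - x))) x := by
  have hx : x ≠ 0 := ne_of_gt h0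
  have hx1 : (1:ℝ) - x ≠ 0 := by linarith
  have hd := hasDerivAt_dilog h0 h1
  have hlog : HasDerivAt Real.log x⁻¹ x := Real.hasDerivAt_log hx
  have hlog2 : HasDerivAt (fun y : ℝ => Real.log (1 - y)) (-(1 - x)⁻¹) x := by
    have h := (Real.hasDerivAt_log hx1).comp x ((hasDerivAt_const x (1:ℝ)).sub (hasDerivAt_id x))
    exact h.congr_deriv (by ring)
  have hm : HasDerivAt (fun y : ℝ => 1 / 2 * Real.log y * Real.log (1 - y))
      (1 / 2 * (x⁻¹ * Real.log (1 - x) + Real.log x * (-(1 - x)⁻¹))) x := by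
    have := ((hlog.const_mul (1/2 : ℝ)).mul hlog2)
    refine this.congr_deriv ?_
    ring
  have := hd.add hm
  refine this.congr_deriv ?_
  field_simp
  ring

lemma continuousAt_rogersL {x : ℝ} (h0 : 0 < x) (h1 : x < 1) : ContinuousAt rogersL x :=
  (hasDerivAt_rogersL h0 h1).continuousAt

lemma tendsto_dilog_zero : Tendsto dilog (𝓝[>] (0:ℝ)) (𝓝 0) := by
  have h := (continuousOn_dilog 0 (by norm_num)).tendsto
  rw [dilog_zero] at h
  exact h.mono_left (nhdsWithin_le_of_mem (mem_nhdsWithin_of_mem_nhds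
    (Icc_mem_nhds (by norm_num) (by norm_num))))

lemma tendsto_log_mul_log_zero :
    Tendsto (fun x : ℝ => Real.log x * Real.log (1 - x)) (𝓝[>] (0:ℝ)) (𝓝 0) := by
  have hg : Tendsto (fun x : ℝ => -2 * (Real.log x * x)) (𝓝[>] (0:ℝ)) (𝓝 0) := by
    have h := tendsto_log_mul_rpow_nhdsGT_zero (r := 1) one_pos
    have h2 : Tendsto (fun x : ℝ => Real.log x * x) (𝓝[>] (0:ℝ)) (𝓝 0) := by
      refine h.congr' ?_
      filter_upwards [self_mem_nhdsWithin] with x hx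
      rw [Real.rpow_one]
    simpa using h2.const_mul (-2)
  apply squeeze_zero_norm' _ hg
  filter_upwards [Ioo_mem_nhdsGT_of_mem (by norm_num : (0:ℝ) ∈ Ico 0 (1/2:ℝ))] with x hx
  obtain ⟨hx0, hx2⟩ := hx
  have hx1 : x < 1 := by linarith
  have hlx : Real.log x < 0 := Real.log_neg hx0 hx1
  have h1x : (0:ℝ) < 1 - x := by linarith
  have hl1x : Real.log (1 - x) ≤ 0 := Real.log_nonpos (by linarith) (by linarith)
  have hb : -Real.log (1 - x) ≤ 2 * x := by
    have := Real.log_le_sub_one_of_pos (inv_pos.mpr h1x)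
    rw [Real.log_inv] at this
    have h2 : (1 - x)⁻¹ - 1 = x / (1 - x) := by field_simp; ring
    rw [h2] at this
    have h3 : x / (1 - x) ≤ 2 * x := by
      rw [div_le_iff₀ h1x]
      nlinarith
    linarith
  rw [Real.norm_eq_abs, abs_mul, abs_of_neg hlx, abs_of_nonpos hl1x]
  nlinarith

lemma tendsto_rogersL_zero : Tendsto rogersL (𝓝[>] (0:ℝ)) (𝓝 0) := by
  have h : Tendsto (fun x : ℝ => dilog x + 1 / 2 * Real.log x * Real.log (1 - x))
      (𝓝[>] (0:ℝ)) (𝓝 (0 + 1/2 * 0)) := by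
    apply tendsto_dilog_zero.add
    have := tendsto_log_mul_log_zero.const_mul (1/2 : ℝ)
    refine this.congr' ?_
    filter_upwards with x
    ring
  have he : rogersL = fun x : ℝ => dilog x + 1 / 2 * Real.log x * Real.log (1 - x) := by
    funext z; rfl
  rw [he]
  convert h using 1
  norm_num

lemma tendsto_dilog_one_sub : Tendsto (fun x : ℝ => dilog (1 - x)) (𝓝[>] (0:ℝ))
    (𝓝 (Real.pi ^ 2 / 6)) := by
  have hc : Tendsto dilog (𝓝[Icc (-1:ℝ) 1] 1) (𝓝 (dilog 1)) :=
    (continuousOn_dilog 1 (by norm_num)).tendsto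
  rw [dilog_one] at hc
  apply hc.comp
  rw [tendsto_nhdsWithin_iff]
  constructor
  · have : Tendsto (fun x : ℝ => 1 - x) (𝓝[>] (0:ℝ)) (𝓝 (1 - 0)) :=
      (tendsto_const_nhds.sub tendsto_id).mono_left nhdsWithin_le_nhds
    simpa using this
  · filter_upwards [Ioo_mem_nhdsGT_of_mem (by norm_num : (0:ℝ) ∈ Ico 0 (1:ℝ))] with x hx
    constructor <;> [linarith [hx.2]; linarith [hx.1]]

lemma rogers_reflection {x : ℝ} (h0 : 0 < x) (h1 : x < 1) :
    rogersL x + rogersL (1 - x) = Real.pi ^ 2 / 6 := by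
  set G : ℝ → ℝ := fun z => rogersL z + rogersL (1 - z) with hG
  have hderiv : ∀ z ∈ Ioo (0:ℝ) 1, HasDerivAt G 0 z := by
    intro z hz
    obtain ⟨hz0, hz1⟩ := hz
    have h1' := hasDerivAt_rogersL hz0 hz1
    have hinner : HasDerivAt (fun y : ℝ => 1 - y) (-1) z := by
      exact ((hasDerivAt_const z (1:ℝ)).sub (hasDerivAt_id z)).congr_deriv (by ring)
    have houter := hasDerivAt_rogersL (by linarith : (0:ℝ) < 1 - z) (by linarith : 1 - z < 1)
    have h2' := houter.comp z hinner
    have key := h1'.add h2'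
    refine key.congr_deriv ?_
    have e : (1:ℝ) - (1 - z) = z := by ring
    rw [e]
    ring
  have hconst : ∀ a ∈ Ioo (0:ℝ) 1, ∀ b ∈ Ioo (0:ℝ) 1, G a = G b := by
    have main : ∀ a ∈ Ioo (0:ℝ) 1, ∀ b ∈ Ioo (0:ℝ) 1, a < b → G a = G b := by
      intro a ha b hb hab
      have hcont : ContinuousOn G (Icc a b) := by
        intro t ht
        have ht' : t ∈ Ioo (0:ℝ) 1 := ⟨lt_of_lt_of_le ha.1 ht.1, lt_of_le_of_lt ht.2 hb.2⟩
        exact ((hderiv t ht').continuousAt).continuousWithinAt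
      obtain ⟨c, hc, hceq⟩ := exists_hasDerivAt_eq_slope G (fun _ => 0) hab hcont
        (fun t ht => hderiv t ⟨lt_of_lt_of_le ha.1 ht.1.le, lt_of_le_of_lt ht.2.le hb.2⟩)
      have : (G b - G a) / (b - a) = 0 := hceq.symm
      have hba : b - a ≠ 0 := by linarith
      field_simp at this
      linarith
    intro a ha b hb
    rcases lt_trichotomy a b with h | h | h
    · exact main a ha b hb h
    · rw [h]
    · exact (main b hb a ha h).symm
  have hlim : Tendsto G (𝓝[>] (0:ℝ)) (𝓝 (Real.pi ^ 2 / 6)) := by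
    have hGeq : ∀ z : ℝ, G z = dilog z + dilog (1 - z) + Real.log z * Real.log (1 - z) := by
      intro z
      simp only [hG, rogersL]
      have e : (1:ℝ) - (1 - z) = z := by ring
      rw [e]
      ring
    have h := (tendsto_dilog_zero.add tendsto_dilog_one_sub).add tendsto_log_mul_log_zero
    rw [tendsto_congr hGeq]
    simpa using h
  have hlim2 : Tendsto G (𝓝[>] (0:ℝ)) (𝓝 (G x)) := by
    have : ∀ᶠ z in 𝓝[>] (0:ℝ), G z = G x := by
      filter_upwards [Ioo_mem_nhdsGT_of_mem (by norm_num : (0:ℝ) ∈ Ico 0 (1:ℝ))] with z hz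
      exact hconst z hz x ⟨h0, h1⟩
    exact Tendsto.congr' (by filter_upwards [this] with z hz; exact hz.symm) tendsto_const_nhds
  exact tendsto_nhds_unique hlim2 hlim

lemma rogers_abel {x y : ℝ} (hx0 : 0 < x) (hx1 : x < 1) (hy0 : 0 < y) (hy1 : y < 1) :
    rogersL x + rogersL y = rogersL (x * y) + rogersL (x * (1 - y) / (1 - x * y))
      + rogersL (y * (1 - x) / (1 - x * y)) := by
  set H : ℝ → ℝ := fun z => rogersL z + rogersL y - rogersL (z * y)
    - rogersL (z * (1 - y) / (1 - z * y)) - rogersL (y * (1 - z) / (1 - z * y)) with hH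
  -- basic facts for z ∈ Ioo 0 1
  have hfacts : ∀ z ∈ Ioo (0:ℝ) 1, 0 < 1 - z * y ∧ 0 < z * y ∧ z * y < 1 ∧
      0 < z * (1 - y) / (1 - z * y) ∧ z * (1 - y) / (1 - z * y) < 1 ∧
      0 < y * (1 - z) / (1 - z * y) ∧ y * (1 - z) / (1 - z * y) < 1 := by
    intro z hz
    obtain ⟨hz0, hz1⟩ := hz
    have h1 : z * y < 1 := by nlinarith
    have h2 : 0 < 1 - z * y := by linarith
    have h3 : 0 < z * y := mul_pos hz0 hy0
    refine ⟨h2, h3, h1, ?_, ?_, ?_, ?_⟩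
    · apply div_pos (by nlinarith) h2
    · rw [div_lt_one h2]; nlinarith
    · apply div_pos (by nlinarith) h2
    · rw [div_lt_one h2]; nlinarith
  have hderiv : ∀ z ∈ Ioo (0:ℝ) 1, HasDerivAt H 0 z := by
    intro z hz
    obtain ⟨hz0, hz1⟩ := hz
    obtain ⟨h2, h3, h1, hA0, hA1, hB0, hB1⟩ := hfacts z ⟨hz0, hz1⟩
    -- derivatives of inner functions
    have dmul : HasDerivAt (fun z : ℝ => z * y) y z := by
      simpa using (hasDerivAt_id z).mul_const y
    have dA : HasDerivAt (fun z : ℝ => z * (1 - y) / (1 - z * y))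
        (((1 - y) * (1 - z * y) - z * (1 - y) * (0 - (1 * y))) / (1 - z * y) ^ 2) z := by
      have hnum : HasDerivAt (fun z : ℝ => z * (1 - y)) (1 - y) z := by
        simpa using (hasDerivAt_id z).mul_const (1 - y)
      have hden : HasDerivAt (fun z : ℝ => 1 - z * y) (0 - 1 * y) z :=
        (hasDerivAt_const z (1:ℝ)).sub ((hasDerivAt_id z).mul_const y)
      exact hnum.div hden (ne_of_gt h2)
    have dB : HasDerivAt (fun z : ℝ => y * (1 - z) / (1 - z * y))
        ((y * (0 - 1) * (1 - z * y) - y * (1 - z) * (0 - (1 * y))) / (1 - z * y) ^ 2) z := by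
      have hnum : HasDerivAt (fun z : ℝ => y * (1 - z)) (y * (0 - 1)) z :=
        ((hasDerivAt_const z (1:ℝ)).sub (hasDerivAt_id z)).const_mul y
      have hden : HasDerivAt (fun z : ℝ => 1 - z * y) (0 - 1 * y) z :=
        (hasDerivAt_const z (1:ℝ)).sub ((hasDerivAt_id z).mul_const y)
      exact hnum.div hden (ne_of_gt h2)
    have d1 := hasDerivAt_rogersL hz0 hz1
    have d3 := (hasDerivAt_rogersL h3 h1).comp z dmul
    have d4 := (hasDerivAt_rogersL hA0 hA1).comp z dA
    have d5 := (hasDerivAt_rogersL hB0 hB1).comp z dB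
    have key := (((d1.add_const (rogersL y)).sub d3).sub d4).sub d5
    refine key.congr_deriv ?_
    -- now prove the derivative expression is zero
    have hzne : z ≠ 0 := ne_of_gt hz0
    have hyne : y ≠ 0 := ne_of_gt hy0
    have h1zne : (1:ℝ) - z ≠ 0 := by linarith
    have h1yne : (1:ℝ) - y ≠ 0 := by linarith
    have h2ne : (1:ℝ) - z * y ≠ 0 := ne_of_gt h2
    have lzy : Real.log (z * y) = Real.log z + Real.log y := Real.log_mul hzne hyne
    have l1zy : (1:ℝ) - z * y ≠ 0 := h2ne
    have lA : Real.log (z * (1 - y) / (1 - z * y))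
        = Real.log z + Real.log (1 - y) - Real.log (1 - z * y) := by
      rw [Real.log_div (by positivity) h2ne, Real.log_mul hzne h1yne]
    have e1A : 1 - z * (1 - y) / (1 - z * y) = (1 - z) / (1 - z * y) := by
      field_simp
      ring
    have l1A : Real.log (1 - z * (1 - y) / (1 - z * y))
        = Real.log (1 - z) - Real.log (1 - z * y) := by
      rw [e1A, Real.log_div h1zne h2ne]
    have lB : Real.log (y * (1 - z) / (1 - z * y))
        = Real.log y + Real.log (1 - z) - Real.log (1 - z * y) := by
      rw [Real.log_div (by positivity) h2ne, Real.log_mul hyne h1zne]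
    have e1B : 1 - y * (1 - z) / (1 - z * y) = (1 - y) / (1 - z * y) := by
      rw [eq_div_iff h2ne, sub_mul, div_mul_cancel₀ _ h2ne]
      ring
    have l1B : Real.log (1 - y * (1 - z) / (1 - z * y))
        = Real.log (1 - y) - Real.log (1 - z * y) := by
      rw [e1B, Real.log_div h1yne h2ne]
    rw [lzy, lA, l1A, lB, l1B]
    have hAne : z * (1 - y) / (1 - z * y) ≠ 0 := ne_of_gt hA0
    have h1Ane : (1:ℝ) - z * (1 - y) / (1 - z * y) ≠ 0 := by
      rw [e1A]; positivity
    have hBne : y * (1 - z) / (1 - z * y) ≠ 0 := ne_of_gt hB0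
    have h1Bne : (1:ℝ) - y * (1 - z) / (1 - z * y) ≠ 0 := by
      rw [e1B]; positivity
    rw [e1A, e1B]
    have hzyne : z * y ≠ 0 := mul_ne_zero hzne hyne
    have h1zyne : (1:ℝ) - z * y ≠ 0 := h2ne
    field_simp
    ring
  -- constancy via MVT
  have hconst : ∀ a ∈ Ioo (0:ℝ) 1, ∀ b ∈ Ioo (0:ℝ) 1, H a = H b := by
    have main : ∀ a ∈ Ioo (0:ℝ) 1, ∀ b ∈ Ioo (0:ℝ) 1, a < b → H a = H b := by
      intro a ha b hb hab
      have hcont : ContinuousOn H (Icc a b) := by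
        intro t ht
        have ht' : t ∈ Ioo (0:ℝ) 1 := ⟨lt_of_lt_of_le ha.1 ht.1, lt_of_le_of_lt ht.2 hb.2⟩
        exact ((hderiv t ht').continuousAt).continuousWithinAt
      obtain ⟨c, hc, hceq⟩ := exists_hasDerivAt_eq_slope H (fun _ => 0) hab hcont
        (fun t ht => hderiv t ⟨lt_of_lt_of_le ha.1 ht.1.le, lt_of_le_of_lt ht.2.le hb.2⟩)
      have h0' : (H b - H a) / (b - a) = 0 := hceq.symm
      have hba : b - a ≠ 0 := by linarith
      field_simp at h0'
      linarith
    intro a ha b hb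
    rcases lt_trichotomy a b with h | h | h
    · exact main a ha b hb h
    · rw [h]
    · exact (main b hb a ha h).symm
  -- limit of H at 0⁺ is 0
  have hlim : Tendsto H (𝓝[>] (0:ℝ)) (𝓝 0) := by
    have t1 : Tendsto (fun z : ℝ => rogersL z) (𝓝[>] (0:ℝ)) (𝓝 0) := tendsto_rogersL_zero
    have t2 : Tendsto (fun _ : ℝ => rogersL y) (𝓝[>] (0:ℝ)) (𝓝 (rogersL y)) := tendsto_const_nhds
    have t3 : Tendsto (fun z : ℝ => rogersL (z * y)) (𝓝[>] (0:ℝ)) (𝓝 0) := by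
      apply tendsto_rogersL_zero.comp
      rw [tendsto_nhdsWithin_iff]
      constructor
      · have : Tendsto (fun z : ℝ => z * y) (𝓝[>] (0:ℝ)) (𝓝 (0 * y)) :=
          (tendsto_id.mul_const y).mono_left nhdsWithin_le_nhds
        simpa using this
      · filter_upwards [self_mem_nhdsWithin] with z hz
        exact mul_pos hz hy0
    have t4 : Tendsto (fun z : ℝ => rogersL (z * (1 - y) / (1 - z * y))) (𝓝[>] (0:ℝ)) (𝓝 0) := by
      apply tendsto_rogersL_zero.comp
      rw [tendsto_nhdsWithin_iff]
      constructor
      · have hc : ContinuousAt (fun z : ℝ => z * (1 - y) / (1 - z * y)) 0 := by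
          apply ContinuousAt.div
          · fun_prop
          · fun_prop
          · norm_num
        have := hc.tendsto.mono_left (nhdsWithin_le_nhds (s := Ioi (0:ℝ)))
        simpa using this
      · filter_upwards [Ioo_mem_nhdsGT_of_mem (by norm_num : (0:ℝ) ∈ Ico 0 (1:ℝ))] with z hz
        exact (hfacts z hz).2.2.2.1
    have t5 : Tendsto (fun z : ℝ => rogersL (y * (1 - z) / (1 - z * y))) (𝓝[>] (0:ℝ))
        (𝓝 (rogersL y)) := by
      have hc : ContinuousAt (fun z : ℝ => y * (1 - z) / (1 - z * y)) 0 := by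
        apply ContinuousAt.div
        · fun_prop
        · fun_prop
        · norm_num
      have ht : Tendsto (fun z : ℝ => y * (1 - z) / (1 - z * y)) (𝓝[>] (0:ℝ)) (𝓝 y) := by
        have h' := hc.tendsto.mono_left (nhdsWithin_le_nhds (s := Ioi (0:ℝ)))
        simpa using h'
      exact (continuousAt_rogersL hy0 hy1).tendsto.comp ht
    have := (((t1.add t2).sub t3).sub t4).sub t5
    simpa using this
  have hlim2 : Tendsto H (𝓝[>] (0:ℝ)) (𝓝 (H x)) := by
    have hev : ∀ᶠ z in 𝓝[>] (0:ℝ), H z = H x := by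
      filter_upwards [Ioo_mem_nhdsGT_of_mem (by norm_num : (0:ℝ) ∈ Ico 0 (1:ℝ))] with z hz
      exact hconst z hz x ⟨hx0, hx1⟩
    exact Tendsto.congr' (by filter_upwards [hev] with z hz; exact hz.symm) tendsto_const_nhds
  have hzero : H x = 0 := tendsto_nhds_unique hlim2 hlim
  have hHx : rogersL x + rogersL y - rogersL (x * y) - rogersL (x * (1 - y) / (1 - x * y))
      - rogersL (y * (1 - x) / (1 - x * y)) = 0 := hzero
  linarith

set_option maxHeartbeats 2000000 in
lemma sqrt3_two_term_aux :
    rogersL ((Real.sqrt 3 + 2) / 4) + 8 * rogersL (Real.sqrt 3 - 1) =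
      13 * Real.pi ^ 2 / 12 := by
  set s := Real.sqrt 3 with hs
  have hs2 : s ^ 2 = 3 := Real.sq_sqrt (by norm_num)
  have hs0 : 0 < s := Real.sqrt_pos.mpr (by norm_num)
  have h17 : 1.7 < s := by nlinarith
  have h18 : s < 1.8 := by nlinarith
  -- reflection instances
  have R1 := rogers_reflection (x := (2 - s)/4) (by linarith) (by linarith)
  rw [show 1 - (2 - s)/4 = (s + 2)/4 by ring] at R1
  have R2 := rogers_reflection (x := 2 - s) (by linarith) (by linarith)
  rw [show 1 - (2 - s) = s - 1 by ring] at R2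
  have R3 := rogers_reflection (x := 2*s - 3) (by linarith) (by linarith)
  rw [show 1 - (2*s - 3) = 4 - 2*s by ring] at R3
  have R4 := rogers_reflection (x := (1:ℝ)/2) (by norm_num) (by norm_num)
  rw [show 1 - (1:ℝ)/2 = 1/2 by norm_num] at R4
  -- abel instances
  have A1 := rogers_abel (x := s - 1) (y := s - 1)
    (by linarith) (by linarith) (by linarith) (by linarith)
  rw [show (s-1)*(1-(s-1))/(1-(s-1)*(s-1)) = (3-s)/3 by
        rw [div_eq_iff (ne_of_gt (by nlinarith : (0:ℝ) < 1-(s-1)*(s-1)))]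
        linear_combination ((2-s)/3)*hs2,
      show (s-1)*(s-1) = 4 - 2*s by linear_combination hs2] at A1
  have A2 := rogers_abel (x := 2 - s) (y := 2 - s)
    (by linarith) (by linarith) (by linarith) (by linarith)
  rw [show (2-s)*(1-(2-s))/(1-(2-s)*(2-s)) = (3-s)/6 by
        rw [div_eq_iff (ne_of_gt (by nlinarith : (0:ℝ) < 1-(2-s)*(2-s)))]
        linear_combination ((1-s)/6)*hs2,
      show (2-s)*(2-s) = 7 - 4*s by linear_combination hs2] at A2
  have A3 := rogers_abel (x := (s-1)/2) (y := (s-1)/2)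
    (by linarith) (by linarith) (by linarith) (by linarith)
  rw [show ((s-1)/2)*(1-(s-1)/2)/(1-((s-1)/2)*((s-1)/2)) = 2 - s by
        rw [div_eq_iff (ne_of_gt (by nlinarith : (0:ℝ) < 1-((s-1)/2)*((s-1)/2)))]
        linear_combination ((3-s)/4)*hs2,
      show ((s-1)/2)*((s-1)/2) = (2-s)/2 by linear_combination (1/4)*hs2] at A3
  have A4 := rogers_abel (x := (2-s)/2) (y := (1:ℝ)/2)
    (by linarith) (by linarith) (by norm_num) (by norm_num)
  rw [show ((2-s)/2)*(1-(1:ℝ)/2)/(1-((2-s)/2)*((1:ℝ)/2)) = 7 - 4*s by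
        rw [div_eq_iff (ne_of_gt (by nlinarith : (0:ℝ) < 1-((2-s)/2)*((1:ℝ)/2)))]
        linear_combination hs2,
      show ((1:ℝ)/2)*(1-(2-s)/2)/(1-((2-s)/2)*((1:ℝ)/2)) = 2*s - 3 by
        rw [div_eq_iff (ne_of_gt (by nlinarith : (0:ℝ) < 1-((2-s)/2)*((1:ℝ)/2)))]
        linear_combination (-1/2)*hs2,
      show ((2-s)/2)*((1:ℝ)/2) = (2-s)/4 by ring] at A4
  have A5 := rogers_abel (x := (3-s)/3) (y := (1:ℝ)/2)
    (by linarith) (by linarith) (by norm_num) (by norm_num)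
  rw [show ((3-s)/3)*(1-(1:ℝ)/2)/(1-((3-s)/3)*((1:ℝ)/2)) = 2 - s by
        rw [div_eq_iff (ne_of_gt (by nlinarith : (0:ℝ) < 1-((3-s)/3)*((1:ℝ)/2)))]
        linear_combination (1/6)*hs2,
      show ((1:ℝ)/2)*(1-(3-s)/3)/(1-((3-s)/3)*((1:ℝ)/2)) = (s-1)/2 by
        rw [div_eq_iff (ne_of_gt (by nlinarith : (0:ℝ) < 1-((3-s)/3)*((1:ℝ)/2)))]
        linear_combination (-1/12)*hs2,
      show ((3-s)/3)*((1:ℝ)/2) = (3-s)/6 by ring] at A5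
  linarith [R1, R2, R3, R4, A1, A2, A3, A4, A5]

/-- A known two-term dilogarithm identity over ℚ(√3) with coefficient 8. -/
theorem sqrt3_two_term :
    rogersL ((Real.sqrt 3 + 2) / 4) + 8 * rogersL (Real.sqrt 3 - 1) =
      13 * Real.pi ^ 2 / 12 := sqrt3_two_term_aux
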